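/- Fix t_0 > 0 and a finite Borel measure μ on ℝ^ℓ with compact support. If x_0 ∈ ℝ^ℓ is a maximizer of x ↦ F_{x,t_0}(μ) = (4π t_0)^{-k/2} ∫ e^{-|y-x|^2/(4t_0)} dμ(y), and μ ≠ 0, then the weighted integral ∫ (y - x_0) e^{-|y-x_0|^2/(4t_0)} dμ(y) = 0, and consequently x_0 lies in the closed convex hull of the support of μ. -/

import Mathlib

/-!
Moving the centre from `x₀` to `x₀ + s • v` multiplies the Gaussian weight of each point `y` by
`exp Δ`, where `Δ = (2 s ⟪y - x₀, v⟫ - s² ‖v‖²) / (4 t)`. Since `exp Δ ≥ 1 + Δ`, integrating against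
`μ` shows that the Gaussian mass at `x₀ + s • I`, with `I` the Gaussian first moment at `x₀`, is at
least `M + s ‖I‖² (2 - s M) / (4 t)`, where `M` is the mass at `x₀`. Maximality at `x₀` and a small
`s > 0` force `I = 0`. A hyperplane strictly separating `x₀` from a closed convex set carrying `μ`
would make the pairing of the separating functional with `I` strictly positive.
-/

open Real MeasureTheory

open scoped RealInnerProductSpace

noncomputable def gaussianWeight {E : Type*} [NormedAddCommGroup E] (t : ℝ) (x y : E) : ℝ :=
  exp (-‖y - x‖ ^ 2 / (4 * t))

theorem mul_exp_neg_sq_div_le {c : ℝ} (hc : 0 < c) (r : ℝ) : r * exp (-r ^ 2 / c) ≤ 1 + c := by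
  rw [neg_div, exp_neg, ← div_eq_mul_inv, div_le_iff₀ (exp_pos _)]
  have h_one : 1 ≤ exp (r ^ 2 / c) := one_le_exp (by positivity)
  have h_sq : r ^ 2 ≤ c * exp (r ^ 2 / c) := calc
    r ^ 2 = c * (r ^ 2 / c) := by field_simp
    _ ≤ c * exp (r ^ 2 / c) := by gcongr; linarith [add_one_le_exp (r ^ 2 / c)]
  nlinarith [sq_nonneg (r - 1)]

section normed

variable {E : Type*} [NormedAddCommGroup E]

theorem gaussianWeight_pos (t : ℝ) (x y : E) : 0 < gaussianWeight t x y := exp_pos _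

theorem gaussianWeight_le_one {t : ℝ} (ht : 0 ≤ t) (x y : E) : gaussianWeight t x y ≤ 1 :=
  exp_le_one_iff.mpr (div_nonpos_of_nonpos_of_nonneg (by simp) (by positivity))

theorem norm_gaussianWeight_smul_sub_le [NormedSpace ℝ E] {t : ℝ} (ht : 0 < t) (x y : E) :
    ‖gaussianWeight t x y • (y - x)‖ ≤ 1 + 4 * t := by
  rw [norm_smul, norm_of_nonneg (gaussianWeight_pos t x y).le, mul_comm]
  exact mul_exp_neg_sq_div_le (by positivity) _

variable [MeasurableSpace E] [OpensMeasurableSpace E] (μ : Measure E) [IsFiniteMeasure μ] {t : ℝ}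

theorem integrable_gaussianWeight (ht : 0 ≤ t) (x : E) :
    Integrable (gaussianWeight t x) μ :=
  .of_bound (Continuous.aestronglyMeasurable (by unfold gaussianWeight; fun_prop)) 1 <|
    ae_of_all _ fun y => by
      rw [norm_of_nonneg (gaussianWeight_pos t x y).le]
      exact gaussianWeight_le_one ht x y

theorem integrable_gaussianWeight_smul_sub [NormedSpace ℝ E] [SecondCountableTopology E]
    (ht : 0 < t) (x : E) :
    Integrable (fun y => gaussianWeight t x y • (y - x)) μ :=
  .of_bound (Continuous.aestronglyMeasurable (by unfold gaussianWeight; fun_prop)) (1 + 4 * t) <|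
    ae_of_all _ (norm_gaussianWeight_smul_sub_le ht x)

end normed

section inner

variable {E : Type*} [NormedAddCommGroup E] [InnerProductSpace ℝ E]

theorem gaussianWeight_mul_add_inner_le_gaussianWeight_add_smul (t s : ℝ) (x y v : E) :
    gaussianWeight t x y * (1 - s ^ 2 * ‖v‖ ^ 2 / (4 * t)) +
        s / (2 * t) * ⟪v, gaussianWeight t x y • (y - x)⟫ ≤
      gaussianWeight t (x + s • v) y := by
  have h_shift : gaussianWeight t (x + s • v) y =
      gaussianWeight t x y * exp ((2 * s * ⟪y - x, v⟫ - s ^ 2 * ‖v‖ ^ 2) / (4 * t)) := by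
    rw [gaussianWeight, gaussianWeight, ← exp_add, sub_add_eq_sub_sub, norm_sub_sq_real,
      inner_smul_right, norm_smul, mul_pow, norm_eq_abs, sq_abs]
    ring_nf
  rw [h_shift, inner_smul_right, real_inner_comm]
  calc _ = gaussianWeight t x y * ((2 * s * ⟪y - x, v⟫ - s ^ 2 * ‖v‖ ^ 2) / (4 * t) + 1) := by
        ring
    _ ≤ _ := mul_le_mul_of_nonneg_left (add_one_le_exp _) (gaussianWeight_pos t x y).le

variable [CompleteSpace E] [MeasurableSpace E] [OpensMeasurableSpace E] [SecondCountableTopology E]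
  (μ : Measure E) [IsFiniteMeasure μ] {t : ℝ}

theorem integral_gaussianWeight_mul_add_inner_le_integral_add_smul (ht : 0 < t) (s : ℝ)
    (x v : E) :
    (∫ y, gaussianWeight t x y ∂μ) * (1 - s ^ 2 * ‖v‖ ^ 2 / (4 * t)) +
        s / (2 * t) * ⟪v, ∫ y, gaussianWeight t x y • (y - x) ∂μ⟫ ≤
      ∫ y, gaussianWeight t (x + s • v) y ∂μ := by
  have h_int := integrable_gaussianWeight_smul_sub μ ht x
  have h_mass := (integrable_gaussianWeight μ ht.le x).mul_const (1 - s ^ 2 * ‖v‖ ^ 2 / (4 * t))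
  have h_moment := (h_int.const_inner v).const_mul (s / (2 * t))
  rw [← integral_mul_const, ← integral_inner h_int, ← integral_const_mul,
    ← integral_add h_mass h_moment]
  exact integral_mono (h_mass.add h_moment) (integrable_gaussianWeight μ ht.le _)
    (gaussianWeight_mul_add_inner_le_gaussianWeight_add_smul t s x · v)

theorem integral_gaussianWeight_smul_sub_eq_zero_of_forall_le (ht : 0 < t) {x₀ : E}
    (hmax : ∀ x, ∫ y, gaussianWeight t x y ∂μ ≤ ∫ y, gaussianWeight t x₀ y ∂μ) :
    ∫ y, gaussianWeight t x₀ y • (y - x₀) ∂μ = 0 := by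
  set I := ∫ y, gaussianWeight t x₀ y • (y - x₀) ∂μ
  set M := ∫ y, gaussianWeight t x₀ y ∂μ
  have hM : 0 ≤ M := integral_nonneg fun y => (gaussianWeight_pos t x₀ y).le
  set s := 1 / (M + 1)
  have hsM : s * M < 2 := by
    calc s * M = M / (M + 1) := by ring
      _ < 2 := by rw [div_lt_iff₀ (by positivity)]; linarith
  have h_var := (integral_gaussianWeight_mul_add_inner_le_integral_add_smul μ ht s x₀ I).trans
    (hmax (x₀ + s • I))
  rw [real_inner_self_eq_norm_sq] at h_var
  have h_prod : ‖I‖ ^ 2 * (s * (2 - s * M) / (4 * t)) ≤ 0 := by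
    linear_combination h_var
  have h_sq : ‖I‖ ^ 2 ≤ 0 :=
    nonpos_of_mul_nonpos_left h_prod (by have := sub_pos.mpr hsM; positivity)
  exact norm_eq_zero.mp (pow_eq_zero_iff two_ne_zero |>.mp (h_sq.antisymm (sq_nonneg _)))

end inner

theorem mem_of_integral_smul_sub_eq_zero {α E : Type*} [MeasurableSpace α] {μ : Measure α}
    [NormedAddCommGroup E] [NormedSpace ℝ E] [CompleteSpace E] (hμ : μ ≠ 0) {g : α → ℝ}
    {f : α → E} {x₀ : E} (hg : ∀ᵐ a ∂μ, 0 < g a) (h_int : Integrable (fun a => g a • (f a - x₀)) μ)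
    (h_zero : ∫ a, g a • (f a - x₀) ∂μ = 0) {A : Set E} (hA : Convex ℝ A) (hA_closed : IsClosed A)
    (hfA : ∀ᵐ a ∂μ, f a ∈ A) : x₀ ∈ A := by
  by_contra hx₀
  obtain ⟨L, u, hL_x₀, hL_A⟩ := geometric_hahn_banach_point_closed hA hA_closed hx₀
  have h_pos : ∀ᵐ a ∂μ, 0 < L (g a • (f a - x₀)) := by
    filter_upwards [hg, hfA] with a hga hfa
    rw [map_smul, map_sub, smul_eq_mul]
    exact mul_pos hga (by linarith [hL_A _ hfa])
  have h_eq : (fun a => L (g a • (f a - x₀))) =ᵐ[μ] 0 := by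
    refine (integral_eq_zero_iff_of_nonneg_ae (h_pos.mono fun a ha => ha.le)
      (L.integrable_comp h_int)).mp ?_
    rw [L.integral_comp_comm h_int, h_zero, map_zero]
  have h_false : ∀ᵐ _ ∂μ, False := by
    filter_upwards [h_pos, h_eq] with a ha ha'
    exact ha.ne' ha'
  exact hμ (ae_eq_bot.mp (Filter.eventually_false_iff_eq_bot.mp h_false))

theorem stmt_6_general {ℓ k : ℕ} (μ : Measure (EuclideanSpace ℝ (Fin ℓ))) [IsFiniteMeasure μ]
    (hμ : μ ≠ 0) (t₀ : ℝ) (ht₀ : 0 < t₀) (x₀ : EuclideanSpace ℝ (Fin ℓ))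
    (hmax : ∀ x : EuclideanSpace ℝ (Fin ℓ),
      (4 * π * t₀) ^ (-(k : ℝ) / 2) * ∫ y, Real.exp (-‖y - x‖ ^ 2 / (4 * t₀)) ∂μ ≤
        (4 * π * t₀) ^ (-(k : ℝ) / 2) * ∫ y, Real.exp (-‖y - x₀‖ ^ 2 / (4 * t₀)) ∂μ) :
    (∫ y, Real.exp (-‖y - x₀‖ ^ 2 / (4 * t₀)) • (y - x₀) ∂μ) = 0 ∧
      ∀ A : Set (EuclideanSpace ℝ (Fin ℓ)), Convex ℝ A → IsClosed A → μ Aᶜ = 0 →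
        x₀ ∈ A := by
  have h_max : ∀ x, ∫ y, gaussianWeight t₀ x y ∂μ ≤ ∫ y, gaussianWeight t₀ x₀ y ∂μ :=
    fun x => le_of_mul_le_mul_left (hmax x) (by positivity)
  have h_moment := integral_gaussianWeight_smul_sub_eq_zero_of_forall_le μ ht₀ h_max
  exact ⟨h_moment, fun A hA hA_closed hμA => mem_of_integral_smul_sub_eq_zero hμ
    (ae_of_all _ (gaussianWeight_pos t₀ x₀)) (integrable_gaussianWeight_smul_sub μ ht₀ x₀)
    h_moment hA hA_closed (ae_iff.mpr hμA)⟩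

/-- First variation argument of Proposition 5.3: if `x₀` maximizes
`x ↦ F_{x,t₀}(μ) = (4π t₀)^{-k/2} ∫ e^{-|y-x|²/(4t₀)} dμ(y)` for a finite nonzero compactly
supported Borel measure `μ`, then the Gaussian-weighted first moment
`∫ e^{-|y-x₀|²/(4t₀)} (y - x₀) dμ(y)` vanishes and `x₀` lies in the closed convex hull of
the support of `μ` (i.e. in every closed convex set of full `μ`-measure). -/
theorem stmt_6 {ℓ k : ℕ} (μ : Measure (EuclideanSpace ℝ (Fin ℓ))) [IsFiniteMeasure μ]
    (hμ : μ ≠ 0) (s : Set (EuclideanSpace ℝ (Fin ℓ))) (hs : IsCompact s) (hμs : μ sᶜ = 0)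
    (t₀ : ℝ) (ht₀ : 0 < t₀) (x₀ : EuclideanSpace ℝ (Fin ℓ))
    (hmax : ∀ x : EuclideanSpace ℝ (Fin ℓ),
      (4 * π * t₀) ^ (-(k : ℝ) / 2) * ∫ y, Real.exp (-‖y - x‖ ^ 2 / (4 * t₀)) ∂μ ≤
        (4 * π * t₀) ^ (-(k : ℝ) / 2) * ∫ y, Real.exp (-‖y - x₀‖ ^ 2 / (4 * t₀)) ∂μ) :
    (∫ y, Real.exp (-‖y - x₀‖ ^ 2 / (4 * t₀)) • (y - x₀) ∂μ) = 0 ∧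
      ∀ A : Set (EuclideanSpace ℝ (Fin ℓ)), Convex ℝ A → IsClosed A → μ Aᶜ = 0 →
        x₀ ∈ A :=
  stmt_6_general μ hμ t₀ ht₀ x₀ hmax
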